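/- Let m ≥ 2 be an integer and let H be the graph with vertices v_1, v_2, v_3, v_4, u_1, u_2, u_3, u_4 and, for each 1 ≤ q ≤ m, two further vertices a_q, b_q, whose edges are: v_1v_4, v_4v_2, v_2v_3, v_3v_1, v_2u_1, u_1u_2, u_2v_1, v_3u_4, u_4u_3, u_3v_4, and v_4 a_q, a_q b_q, b_q u_4 for each q. Then every set S of non-edges of H such that H+S contains no induced C4 satisfies |S| ≥ 2, and the sets S of size exactly 2 with this property are precisely the three sets {v_1v_2, v_1u_1}, {v_1v_2, v_2u_2}, and {v_3v_4, v_3u_3}. -/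
import Mathlib


open SimpleGraph

/-- The clause gadget `H` of the reduction from 3-SAT to `C₄`-free completion:
vertices `Sum.inl s` with `s : Fin 8` (`0,1,2,3` encode `v₁, v₂, v₃, v₄` and `4,5,6,7`
encode `u₁, u₂, u₃, u₄`) and vertices `Sum.inr (q, e)` with `q : Fin m`, `e : Fin 2`
(the inner vertices `a_q` (`e = 0`) and `b_q` (`e = 1`) of the `q`-th path
`v₄ - a_q - b_q - u₄`).  Edges: `v₁v₄, v₄v₂, v₂v₃, v₃v₁, v₂u₁, u₁u₂, u₂v₁, v₃u₄, u₄u₃,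
u₃v₄`, and `v₄ a_q, a_q b_q, b_q u₄` for each `q`. -/
def clauseGadget (m : ℕ) : SimpleGraph (Fin 8 ⊕ Fin m × Fin 2) :=
  SimpleGraph.fromRel (fun u w =>
    match u, w with
    | Sum.inl s, Sum.inl s' =>
        (((s : ℕ), (s' : ℕ)) ∈
          ({(0, 3), (3, 1), (1, 2), (2, 0), (1, 4), (4, 5), (5, 0), (2, 7), (7, 6),
            (6, 3)} : Set (ℕ × ℕ)))
    | Sum.inl s, Sum.inr (_, e) => ((s : ℕ) = 3 ∧ (e : ℕ) = 0) ∨ ((s : ℕ) = 7 ∧ (e : ℕ) = 1)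
    | Sum.inr (q, e), Sum.inr (q', e') => q = q' ∧ (e : ℕ) = 0 ∧ (e' : ℕ) = 1
    | Sum.inr _, Sum.inl _ => False)

/-! ### Auxiliary material -/


lemma c4_iff {V : Type*} (G : SimpleGraph V) :
    Nonempty (SimpleGraph.cycleGraph 4 ↪g G) ↔
      ∃ a b c d : V, G.Adj a b ∧ G.Adj b c ∧ G.Adj c d ∧ G.Adj d a ∧
        ¬ G.Adj a c ∧ ¬ G.Adj b d ∧ a ≠ c ∧ b ≠ d := by
  constructor
  · rintro ⟨f⟩
    refine ⟨f 0, f 1, f 2, f 3, ?_, ?_, ?_, ?_, ?_, ?_, ?_, ?_⟩ <;>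
      simp only [f.map_adj_iff, ne_eq, f.injective.eq_iff, cycleGraph_adj] <;> decide
  · rintro ⟨a, b, c, d, hab, hbc, hcd, hda, hac, hbd, hac', hbd'⟩
    have h1 : a ≠ b := hab.ne
    have h2 : b ≠ c := hbc.ne
    have h3 : c ≠ d := hcd.ne
    have h4 : d ≠ a := hda.ne
    have hinj : Function.Injective ![a, b, c, d] := by
      intro i j hij
      fin_cases i <;> fin_cases j <;> simp_all
    have hca : ¬ G.Adj c a := fun h => hac h.symm
    have hdb : ¬ G.Adj d b := fun h => hbd h.symm
    refine ⟨⟨⟨![a, b, c, d], hinj⟩, ?_⟩⟩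
    intro i j
    fin_cases i <;> fin_cases j <;>
      simp [cycleGraph_adj, hab, hbc, hcd, hda, hac, hbd, hab.symm, hbc.symm, hcd.symm,
        hda.symm, hca, hdb, G.irrefl] <;> decide

lemma c4_false {V : Type*} {G : SimpleGraph V}
    (h : IsEmpty (SimpleGraph.cycleGraph 4 ↪g G)) {a b c d : V}
    (hab : G.Adj a b) (hbc : G.Adj b c) (hcd : G.Adj c d) (hda : G.Adj d a)
    (hac : ¬ G.Adj a c) (hbd : ¬ G.Adj b d) (hac' : a ≠ c) (hbd' : b ≠ d) : False :=
  (not_nonempty_iff.mpr h)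
    ((c4_iff G).mpr ⟨a, b, c, d, hab, hbc, hcd, hda, hac, hbd, hac', hbd'⟩)

def baseL : List (ℕ × ℕ) := [(0,3),(3,1),(1,2),(2,0),(1,4),(4,5),(5,0),(2,7),(7,6),(6,3)]

def RR (x1 y1 x2 y2 s t : Fin 8) : Prop :=
  s ≠ t ∧ (((s:ℕ),(t:ℕ)) ∈ baseL ∨ ((t:ℕ),(s:ℕ)) ∈ baseL ∨
    (s = x1 ∧ t = y1) ∨ (s = y1 ∧ t = x1) ∨ (s = x2 ∧ t = y2) ∨ (s = y2 ∧ t = x2))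

instance (x1 y1 x2 y2 s t : Fin 8) : Decidable (RR x1 y1 x2 y2 s t) := by
  unfold RR; infer_instance

lemma gadget_adj_inl (m : ℕ) (s t : Fin 8) :
    (clauseGadget m).Adj (Sum.inl s) (Sum.inl t) ↔
      s ≠ t ∧ (((s:ℕ),(t:ℕ)) ∈ baseL ∨ (((t:ℕ),(s:ℕ)) ∈ baseL)) := by
  rw [clauseGadget, fromRel_adj]
  simp [baseL, Set.mem_insert_iff, List.mem_cons, Prod.ext_iff]

lemma gadget_adj_inr0 (m : ℕ) (q : Fin m) (y : Fin 8 ⊕ Fin m × Fin 2) :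
    (clauseGadget m).Adj (Sum.inr (q,0)) y ↔ y = Sum.inl 3 ∨ y = Sum.inr (q,1) := by
  rw [clauseGadget, fromRel_adj]
  rcases y with s | ⟨q', e'⟩
  · simp [Sum.inl.injEq, Fin.ext_iff]
  · fin_cases e' <;> simp [Prod.ext_iff, Fin.ext_iff] <;> aesop

lemma gadget_adj_inr1 (m : ℕ) (q : Fin m) (y : Fin 8 ⊕ Fin m × Fin 2) :
    (clauseGadget m).Adj (Sum.inr (q,1)) y ↔ y = Sum.inl 7 ∨ y = Sum.inr (q,0) := by
  rw [clauseGadget, fromRel_adj]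
  rcases y with s | ⟨q', e'⟩
  · simp [Sum.inl.injEq, Fin.ext_iff]
  · fin_cases e' <;> simp [Prod.ext_iff, Fin.ext_iff] <;> aesop

lemma sup_adj_inl (m : ℕ) (x1 y1 x2 y2 s t : Fin 8) :
    (clauseGadget m ⊔
      fromEdgeSet {s(Sum.inl x1, Sum.inl y1),
        s((Sum.inl x2 : Fin 8 ⊕ Fin m × Fin 2), Sum.inl y2)}).Adj
        (Sum.inl s) (Sum.inl t) ↔ RR x1 y1 x2 y2 s t := by
  rw [sup_adj, fromEdgeSet_adj, gadget_adj_inl, RR]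
  simp only [Set.mem_insert_iff, Set.mem_singleton_iff, Sym2.eq_iff, Sum.inl.injEq, ne_eq]
  constructor
  · rintro (⟨h, h2⟩ | ⟨h1, h2⟩) <;> tauto
  · rintro ⟨h, h2⟩
    rcases h2 with h2 | h2 | h2 | h2 | h2 | h2 <;> tauto

lemma sup_adj_inr0 (m : ℕ) (x1 y1 x2 y2 : Fin 8) (q : Fin m) (y : Fin 8 ⊕ Fin m × Fin 2) :
    (clauseGadget m ⊔
      fromEdgeSet {s(Sum.inl x1, Sum.inl y1),
        s((Sum.inl x2 : Fin 8 ⊕ Fin m × Fin 2), Sum.inl y2)}).Adj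
        (Sum.inr (q,0)) y ↔ y = Sum.inl 3 ∨ y = Sum.inr (q,1) := by
  rw [sup_adj, fromEdgeSet_adj, gadget_adj_inr0]
  simp [Sym2.eq_iff]

lemma sup_adj_inr1 (m : ℕ) (x1 y1 x2 y2 : Fin 8) (q : Fin m) (y : Fin 8 ⊕ Fin m × Fin 2) :
    (clauseGadget m ⊔
      fromEdgeSet {s(Sum.inl x1, Sum.inl y1),
        s((Sum.inl x2 : Fin 8 ⊕ Fin m × Fin 2), Sum.inl y2)}).Adj
        (Sum.inr (q,1)) y ↔ y = Sum.inl 7 ∨ y = Sum.inr (q,0) := by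
  rw [sup_adj, fromEdgeSet_adj, gadget_adj_inr1]
  simp [Sym2.eq_iff]

lemma no_c4 {m : ℕ} (G : SimpleGraph (Fin 8 ⊕ Fin m × Fin 2))
    (hnbr0 : ∀ q y, G.Adj (Sum.inr (q,0)) y → y = Sum.inl 3 ∨ y = Sum.inr (q,1))
    (hnbr1 : ∀ q y, G.Adj (Sum.inr (q,1)) y → y = Sum.inl 7 ∨ y = Sum.inr (q,0))
    (h37 : ¬ G.Adj (Sum.inl 3) (Sum.inl 7))
    (hfin : ∀ a b c d : Fin 8, G.Adj (.inl a) (.inl b) → G.Adj (.inl b) (.inl c) →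
      G.Adj (.inl c) (.inl d) → G.Adj (.inl d) (.inl a) → a ≠ c → b ≠ d →
      G.Adj (.inl a) (.inl c) ∨ G.Adj (.inl b) (.inl d)) :
    IsEmpty (SimpleGraph.cycleGraph 4 ↪g G) := by
  rw [← not_nonempty_iff, c4_iff]
  rintro ⟨a, b, c, d, hab, hbc, hcd, hda, hac, hbd, hac', hbd'⟩
  have key : ∀ w x y z : Fin 8 ⊕ Fin m × Fin 2, G.Adj w x → G.Adj w y → x ≠ y →
      G.Adj z x → G.Adj z y → z ≠ w → ∀ q e, w ≠ Sum.inr (q, e) := by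
    rintro w x y z hwx hwy hxy hzx hzy hzw q e rfl
    fin_cases e
    · rcases hnbr0 q x hwx with rfl | rfl <;> rcases hnbr0 q y hwy with rfl | rfl
      · exact hxy rfl
      · rcases hnbr1 q z hzy.symm with rfl | rfl
        · exact h37 hzx.symm
        · exact hzw rfl
      · rcases hnbr1 q z hzx.symm with rfl | rfl
        · exact h37 hzy.symm
        · exact hzw rfl
      · exact hxy rfl
    · rcases hnbr1 q x hwx with rfl | rfl <;> rcases hnbr1 q y hwy with rfl | rfl
      · exact hxy rfl
      · rcases hnbr0 q z hzy.symm with rfl | rfl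
        · exact h37 hzx
        · exact hzw rfl
      · rcases hnbr0 q z hzx.symm with rfl | rfl
        · exact h37 hzy
        · exact hzw rfl
      · exact hxy rfl
  have ka : ∀ q e, a ≠ Sum.inr (q, e) :=
    key a b d c hab hda.symm hbd' hbc.symm hcd (Ne.symm hac')
  have kb : ∀ q e, b ≠ Sum.inr (q, e) :=
    key b c a d hbc hab.symm (Ne.symm hac') hcd.symm hda (Ne.symm hbd')
  have kc : ∀ q e, c ≠ Sum.inr (q, e) :=
    key c d b a hcd hbc.symm (Ne.symm hbd') hda.symm hab hac'
  have kd : ∀ q e, d ≠ Sum.inr (q, e) :=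
    key d a c b hda hcd.symm hac' hab.symm hbc hbd'
  obtain ⟨a', rfl⟩ : ∃ a', a = Sum.inl a' := by
    rcases a with a' | ⟨q, e⟩; exacts [⟨a', rfl⟩, absurd rfl (ka q e)]
  obtain ⟨b', rfl⟩ : ∃ b', b = Sum.inl b' := by
    rcases b with b' | ⟨q, e⟩; exacts [⟨b', rfl⟩, absurd rfl (kb q e)]
  obtain ⟨c', rfl⟩ : ∃ c', c = Sum.inl c' := by
    rcases c with c' | ⟨q, e⟩; exacts [⟨c', rfl⟩, absurd rfl (kc q e)]
  obtain ⟨d', rfl⟩ : ∃ d', d = Sum.inl d' := by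
    rcases d with d' | ⟨q, e⟩; exacts [⟨d', rfl⟩, absurd rfl (kd q e)]
  rcases hfin a' b' c' d' hab hbc hcd hda (by simpa using hac') (by simpa using hbd') with
    h | h
  exacts [hac h, hbd h]

lemma candidate_isEmpty (m : ℕ) (x1 y1 x2 y2 : Fin 8)
    (h37 : ¬ RR x1 y1 x2 y2 3 7)
    (hfin : ∀ a b c d : Fin 8, RR x1 y1 x2 y2 a b → RR x1 y1 x2 y2 b c →
      RR x1 y1 x2 y2 c d → RR x1 y1 x2 y2 d a → a ≠ c → b ≠ d →
      RR x1 y1 x2 y2 a c ∨ RR x1 y1 x2 y2 b d) :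
    IsEmpty (SimpleGraph.cycleGraph 4 ↪g (clauseGadget m ⊔
      fromEdgeSet {s(Sum.inl x1, Sum.inl y1),
        s((Sum.inl x2 : Fin 8 ⊕ Fin m × Fin 2), Sum.inl y2)})) := by
  refine no_c4 _ (fun q y h => (sup_adj_inr0 m x1 y1 x2 y2 q y).mp h)
    (fun q y h => (sup_adj_inr1 m x1 y1 x2 y2 q y).mp h)
    (fun h => h37 ((sup_adj_inl m x1 y1 x2 y2 3 7).mp h)) ?_
  intro a b c d h1 h2 h3 h4 h5 h6
  rw [sup_adj_inl] at h1 h2 h3 h4 ⊢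
  rw [sup_adj_inl]
  exact hfin a b c d h1 h2 h3 h4 h5 h6

section Steps

variable {m : ℕ} {S : Set (Sym2 (Fin 8 ⊕ Fin m × Fin 2))}

lemma adj_base (s t : Fin 8) (h : s ≠ t)
    (hb : ((s:ℕ),(t:ℕ)) ∈ baseL ∨ ((t:ℕ),(s:ℕ)) ∈ baseL) :
    (clauseGadget m ⊔ fromEdgeSet S).Adj (Sum.inl s) (Sum.inl t) :=
  (sup_adj _ _ _ _).mpr (Or.inl ((gadget_adj_inl m s t).mpr ⟨h, hb⟩))

lemma adj_mem {x y : Fin 8 ⊕ Fin m × Fin 2} (h : s(x,y) ∈ S) (hne : x ≠ y) :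
    (clauseGadget m ⊔ fromEdgeSet S).Adj x y :=
  (sup_adj _ _ _ _).mpr (Or.inr ((fromEdgeSet_adj _).mpr ⟨h, hne⟩))

lemma notadj_inl (s t : Fin 8)
    (hb : ¬(((s:ℕ),(t:ℕ)) ∈ baseL ∨ ((t:ℕ),(s:ℕ)) ∈ baseL))
    (hmem : s((Sum.inl s : Fin 8 ⊕ Fin m × Fin 2), Sum.inl t) ∉ S) :
    ¬ (clauseGadget m ⊔ fromEdgeSet S).Adj (Sum.inl s) (Sum.inl t) := by
  rintro (h | h)
  · exact hb ((gadget_adj_inl m s t).mp h).2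
  · exact hmem ((fromEdgeSet_adj _).mp h).1

lemma step1 (hE : IsEmpty (SimpleGraph.cycleGraph 4 ↪g (clauseGadget m ⊔ fromEdgeSet S))) :
    s((Sum.inl 0 : Fin 8 ⊕ Fin m × Fin 2), Sum.inl 1) ∈ S ∨
      s((Sum.inl 2 : Fin 8 ⊕ Fin m × Fin 2), Sum.inl 3) ∈ S := by
  by_contra h
  push_neg at h
  exact c4_false hE (a := Sum.inl 0) (b := Sum.inl 3) (c := Sum.inl 1) (d := Sum.inl 2)
    (adj_base 0 3 (by decide) (by decide)) (adj_base 3 1 (by decide) (by decide))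
    (adj_base 1 2 (by decide) (by decide)) (adj_base 2 0 (by decide) (by decide))
    (notadj_inl 0 1 (by decide) h.1)
    (notadj_inl 3 2 (by decide) (by rw [Sym2.eq_swap]; exact h.2))
    (by simp) (by simp)

lemma step2 (hE : IsEmpty (SimpleGraph.cycleGraph 4 ↪g (clauseGadget m ⊔ fromEdgeSet S)))
    (h : s((Sum.inl 0 : Fin 8 ⊕ Fin m × Fin 2), Sum.inl 1) ∈ S) :
    s((Sum.inl 0 : Fin 8 ⊕ Fin m × Fin 2), Sum.inl 4) ∈ S ∨
      s((Sum.inl 1 : Fin 8 ⊕ Fin m × Fin 2), Sum.inl 5) ∈ S := by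
  by_contra hc
  push_neg at hc
  exact c4_false hE (a := Sum.inl 0) (b := Sum.inl 1) (c := Sum.inl 4) (d := Sum.inl 5)
    (adj_mem h (by simp)) (adj_base 1 4 (by decide) (by decide))
    (adj_base 4 5 (by decide) (by decide)) (adj_base 5 0 (by decide) (by decide))
    (notadj_inl 0 4 (by decide) hc.1) (notadj_inl 1 5 (by decide) hc.2)
    (by simp) (by simp)

lemma step3 (hE : IsEmpty (SimpleGraph.cycleGraph 4 ↪g (clauseGadget m ⊔ fromEdgeSet S)))
    (h : s((Sum.inl 2 : Fin 8 ⊕ Fin m × Fin 2), Sum.inl 3) ∈ S) :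
    s((Sum.inl 2 : Fin 8 ⊕ Fin m × Fin 2), Sum.inl 6) ∈ S ∨
      s((Sum.inl 3 : Fin 8 ⊕ Fin m × Fin 2), Sum.inl 7) ∈ S := by
  by_contra hc
  push_neg at hc
  exact c4_false hE (a := Sum.inl 2) (b := Sum.inl 3) (c := Sum.inl 6) (d := Sum.inl 7)
    (adj_mem h (by simp)) (adj_base 3 6 (by decide) (by decide))
    (adj_base 6 7 (by decide) (by decide)) (adj_base 7 2 (by decide) (by decide))
    (notadj_inl 2 6 (by decide) hc.1) (notadj_inl 3 7 (by decide) hc.2)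
    (by simp) (by simp)

end Steps

/-- Every set of non-edges whose addition makes the clause gadget `C₄`-free has size at
least two, and the sets of size exactly two doing so are precisely
`{v₁v₂, v₁u₁}`, `{v₁v₂, v₂u₂}` and `{v₃v₄, v₃u₃}`. -/
theorem clauseGadget_optimal_completions (m : ℕ) (hm : 2 ≤ m) :
    (∀ S : Set (Sym2 (Fin 8 ⊕ Fin m × Fin 2)),
        (∀ e ∈ S, ¬ e.IsDiag) → Disjoint S (clauseGadget m).edgeSet →
        IsEmpty (SimpleGraph.cycleGraph 4 ↪g (clauseGadget m ⊔ SimpleGraph.fromEdgeSet S)) →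
        2 ≤ S.ncard) ∧
    {S : Set (Sym2 (Fin 8 ⊕ Fin m × Fin 2)) |
        (∀ e ∈ S, ¬ e.IsDiag) ∧ Disjoint S (clauseGadget m).edgeSet ∧
        IsEmpty (SimpleGraph.cycleGraph 4 ↪g (clauseGadget m ⊔ SimpleGraph.fromEdgeSet S)) ∧
        S.ncard = 2} =
      {{s((Sum.inl 0 : Fin 8 ⊕ Fin m × Fin 2), Sum.inl 1),
        s((Sum.inl 0 : Fin 8 ⊕ Fin m × Fin 2), Sum.inl 4)},
       {s((Sum.inl 0 : Fin 8 ⊕ Fin m × Fin 2), Sum.inl 1),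
        s((Sum.inl 1 : Fin 8 ⊕ Fin m × Fin 2), Sum.inl 5)},
       {s((Sum.inl 2 : Fin 8 ⊕ Fin m × Fin 2), Sum.inl 3),
        s((Sum.inl 2 : Fin 8 ⊕ Fin m × Fin 2), Sum.inl 6)}} := by
  have pairset : ∀ (p q : Sym2 (Fin 8 ⊕ Fin m × Fin 2)) (S : Set _), p ∈ S → q ∈ S →
      p ≠ q → S.ncard = 2 → S = {p, q} := by
    intro p q S hp hq hne hcard
    refine (Set.eq_of_subset_of_ncard_le ?_ ?_ S.toFinite).symm
    · exact Set.insert_subset hp (Set.singleton_subset_iff.mpr hq)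
    · rw [hcard, Set.ncard_pair hne]
  constructor
  · intro S _ _ hE
    have : 1 < S.ncard := by
      rw [Set.one_lt_ncard S.toFinite]
      rcases step1 hE with h | h
      · rcases step2 hE h with h2 | h2
        · exact ⟨_, h, _, h2, by simp [Sym2.eq_iff]⟩
        · exact ⟨_, h, _, h2, by simp [Sym2.eq_iff]⟩
      · rcases step3 hE h with h2 | h2
        · exact ⟨_, h, _, h2, by simp [Sym2.eq_iff]⟩
        · exact ⟨_, h, _, h2, by simp [Sym2.eq_iff]⟩
    omega
  · ext S
    simp only [Set.mem_setOf_eq, Set.mem_insert_iff, Set.mem_singleton_iff]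
    constructor
    · rintro ⟨hdiag, hdisj, hE, hcard⟩
      rcases step1 hE with h | h
      · rcases step2 hE h with h2 | h2
        · exact Or.inl (pairset _ _ S h h2 (by simp [Sym2.eq_iff]) hcard)
        · exact Or.inr (Or.inl (pairset _ _ S h h2 (by simp [Sym2.eq_iff]) hcard))
      · rcases step3 hE h with h2 | h2
        · exact Or.inr (Or.inr (pairset _ _ S h h2 (by simp [Sym2.eq_iff]) hcard))
        · exfalso
          have hSeq := pairset _ _ S h h2 (by simp [Sym2.eq_iff]) hcard
          rw [hSeq] at hE
          set q0 : Fin m := ⟨0, by omega⟩ with hq0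
          refine c4_false hE (a := Sum.inl 3) (b := Sum.inr (q0, 0)) (c := Sum.inr (q0, 1))
            (d := Sum.inl 7) ((sup_adj_inr0 m 2 3 3 7 q0 _).mpr (Or.inl rfl)).symm
            ((sup_adj_inr0 m 2 3 3 7 q0 _).mpr (Or.inr rfl))
            ((sup_adj_inr1 m 2 3 3 7 q0 _).mpr (Or.inl rfl))
            ((sup_adj_inl m 2 3 3 7 7 3).mpr (by decide)) ?_ ?_ (by simp) (by simp)
          · intro hadj
            rcases (sup_adj_inr1 m 2 3 3 7 q0 _).mp hadj.symm with h' | h' <;>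
              simp at h'
          · intro hadj
            rcases (sup_adj_inr0 m 2 3 3 7 q0 _).mp hadj with h' | h' <;>
              simp at h'
    · have hdisj : ∀ s t : Fin 8,
          ¬(((s:ℕ),(t:ℕ)) ∈ baseL ∨ ((t:ℕ),(s:ℕ)) ∈ baseL) →
          s((Sum.inl s : Fin 8 ⊕ Fin m × Fin 2), Sum.inl t) ∉ (clauseGadget m).edgeSet := by
        intro s t hb hmem
        rw [mem_edgeSet] at hmem
        exact hb ((gadget_adj_inl m s t).mp hmem).2
      rintro (rfl | rfl | rfl)
      · exact ⟨by rintro e (rfl | rfl) <;> simp,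
          by rw [Set.disjoint_left]; rintro e (rfl | rfl) <;>
            [exact hdisj 0 1 (by decide); exact hdisj 0 4 (by decide)],
          candidate_isEmpty m 0 1 0 4 (by decide) (by decide),
          Set.ncard_pair (by simp [Sym2.eq_iff])⟩
      · exact ⟨by rintro e (rfl | rfl) <;> simp,
          by rw [Set.disjoint_left]; rintro e (rfl | rfl) <;>
            [exact hdisj 0 1 (by decide); exact hdisj 1 5 (by decide)],
          candidate_isEmpty m 0 1 1 5 (by decide) (by decide),
          Set.ncard_pair (by simp [Sym2.eq_iff])⟩
      · exact ⟨by rintro e (rfl | rfl) <;> simp,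
          by rw [Set.disjoint_left]; rintro e (rfl | rfl) <;>
            [exact hdisj 2 3 (by decide); exact hdisj 2 6 (by decide)],
          candidate_isEmpty m 2 3 2 6 (by decide) (by decide),
          Set.ncard_pair (by simp [Sym2.eq_iff])⟩
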